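/- Among all probability distributions P on subsets of {1,…,N} supported on k-element subsets, satisfying the marginal constraints Σ_{A : i∈A, |A|=k} P(A) = f_i for each i (where Σ_i f_i = k and the constraints are feasible), the maximum-entropy distribution has the form P*(A) = (1/Z)·exp(Σ_{i∈A} λ_i) for some real numbers λ_1,…,λ_N, where Z is the normalizing constant over k-subsets. -/

import Mathlib

open Classical

/- STATEMENT 7: Among all probability distributions on subsets of `{1,…,N}`
supported on `k`-element subsets, with inclusion probabilities `f_i`
(`Σ_i f_i = k`, feasible), the maximum-entropy distribution has the Gibbs form
`P*(A) = exp(Σ_{i∈A} λ_i) / Z`. -/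

/-- A distribution on subsets of `Fin N`, supported on `k`-subsets, with
inclusion probabilities `f`. -/
def FeasibleDist (N k : ℕ) (f : Fin N → ℝ) (P : Finset (Fin N) → ℝ) : Prop :=
  (∀ A, 0 ≤ P A) ∧ (∑ A : Finset (Fin N), P A = 1) ∧
  (∀ A : Finset (Fin N), A.card ≠ k → P A = 0) ∧
  (∀ i : Fin N, ∑ A : Finset (Fin N), (if i ∈ A ∧ A.card = k then P A else 0) = f i)

/-- Shannon entropy of a distribution on subsets of `Fin N`
(with the convention `0 · log 0 = 0`). -/
noncomputable def subsetEntropy (N : ℕ) (P : Finset (Fin N) → ℝ) : ℝ :=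
  -∑ A : Finset (Fin N), P A * Real.log (P A)

/-
The feasible distributions form a convex set, and the entropy is concave with infinite slope
at `0`. Since every `f i` lies strictly between `0` and `1`, for each `k`-set `A₀` some
feasible distribution charges `A₀` (Birkhoff–von Neumann decomposes any point of the hypersimplex
into `k`-sets), so moving the maximiser towards it would increase the entropy unless `P A₀ > 0`.
With `P` positive on all `k`-sets, `P + t • w` stays feasible for small `|t|` whenever `w` lies in
the common kernel of the constraints, so the entropy has zero derivative along `w`. Thus `log P` is
orthogonal to that kernel, hence a linear combination of the constraints:
`log P A = c₀ + ∑ i ∈ A, λ i`. Normalising gives the Gibbs form.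
-/

open Finset Real Filter Topology

theorem sum_negMulLog_combo_ge_of_eq_zero {α : Type*} [Fintype α] {p q : α → ℝ}
    (hp : ∀ a, 0 ≤ p a) (hq : ∀ a, 0 ≤ q a) {t : ℝ} (ht0 : 0 ≤ t) (ht1 : t ≤ 1) {a₀ : α}
    (hpa₀ : p a₀ = 0) :
    (1 - t) * ∑ a, negMulLog (p a) + t * ∑ a, negMulLog (q a) + q a₀ * negMulLog t ≤
      ∑ a, negMulLog ((1 - t) * p a + t * q a) := by
  have hterm (a : α) : (1 - t) * negMulLog (p a) + t * negMulLog (q a) +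
      (if a = a₀ then q a₀ * negMulLog t else 0) ≤ negMulLog ((1 - t) * p a + t * q a) := by
    split_ifs with ha
    · subst ha
      simp [hpa₀, negMulLog_mul, add_comm]
    · simpa using concaveOn_negMulLog.2 (hp a) (hq a) (by linarith) ht0 (by ring)
  calc _ = ∑ a, ((1 - t) * negMulLog (p a) + t * negMulLog (q a) +
        if a = a₀ then q a₀ * negMulLog t else 0) := by
        simp [sum_add_distrib, mul_sum]
    _ ≤ _ := sum_le_sum fun a _ => hterm a

theorem hasDerivAt_sum_negMulLog_add_mul {α : Type*} [Fintype α] {p v : α → ℝ}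
    (hpv : ∀ a, p a = 0 → v a = 0) :
    HasDerivAt (fun t => ∑ a, negMulLog (p a + t * v a)) (∑ a, (-log (p a) - 1) * v a) 0 := by
  refine HasDerivAt.fun_sum fun a _ => ?_
  by_cases hpa : p a = 0
  · simpa [hpa, hpv a hpa] using hasDerivAt_const (0 : ℝ) (0 : ℝ)
  · have hline : HasDerivAt (fun t : ℝ => p a + t * v a) (v a) 0 := by
      simpa using ((hasDerivAt_id (0 : ℝ)).mul_const (v a)).const_add (p a)
    exact (hasDerivAt_negMulLog (by simpa using hpa)).comp 0 hline |>.congr_deriv (by simp)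

theorem exists_eq_sum_mul_of_forall_sum_mul_eq_zero {𝕜 α ι : Type*} [Field 𝕜] [Fintype α]
    [Fintype ι] (W : ι → α → 𝕜) (g : α → 𝕜)
    (h : ∀ v : α → 𝕜, (∀ j, ∑ a, v a * W j a = 0) → ∑ a, v a * g a = 0) :
    ∃ c : ι → 𝕜, ∀ a, g a = ∑ j, c j * W j a := by
  have hspan : Fintype.linearCombination 𝕜 g ∈
      Submodule.span 𝕜 (Set.range fun j => Fintype.linearCombination 𝕜 (W j)) :=
    mem_span_of_iInf_ker_le_ker fun v hv => by
      simp only [Submodule.mem_iInf, LinearMap.mem_ker, Fintype.linearCombination_apply,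
        smul_eq_mul] at hv ⊢
      exact h v hv
  obtain ⟨c, hc⟩ := (Submodule.mem_span_range_iff_exists_fun 𝕜).1 hspan
  refine ⟨c, fun a => ?_⟩
  simpa using (LinearMap.congr_fun hc (Pi.single a 1)).symm

theorem eq_exp_div_sum_exp {α : Type*} {s : Finset α} {P ℓ : α → ℝ} {c₀ : ℝ}
    (hP : ∀ a ∈ s, P a = exp (c₀ + ℓ a)) (hsum : ∑ a ∈ s, P a = 1) {a : α} (ha : a ∈ s) :
    P a = exp (ℓ a) / ∑ b ∈ s, exp (ℓ b) := by
  have hZ : ∑ b ∈ s, exp (ℓ b) = exp (-c₀) := by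
    rw [← mul_one (exp (-c₀)), ← hsum, mul_sum]
    refine sum_congr rfl fun b hb => ?_
    rw [hP b hb, ← exp_add]
    ring_nf
  rw [hZ, hP a ha, exp_add, exp_neg, div_inv_eq_mul, mul_comm]

section FeasibleDist

variable {N k : ℕ} {f : Fin N → ℝ} {P : Finset (Fin N) → ℝ}

variable (N k) in
theorem convex_feasibleDist :
    Convex ℝ {p : (Fin N → ℝ) × (Finset (Fin N) → ℝ) | FeasibleDist N k p.1 p.2} := by
  rintro ⟨f₁, R₁⟩ ⟨h0₁, h1₁, hk₁, hm₁⟩ ⟨f₂, R₂⟩ ⟨h0₂, h1₂, hk₂, hm₂⟩ a b ha hb hab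
  dsimp only at *
  simp only [Set.mem_ofPred_eq, Prod.smul_mk, Prod.mk_add_mk]
  refine ⟨fun A => ?_, ?_, fun A hA => ?_, fun i => ?_⟩
  · have := h0₁ A; have := h0₂ A
    simp only [Pi.add_apply, Pi.smul_apply, smul_eq_mul]
    positivity
  · simp [sum_add_distrib, ← mul_sum, h1₁, h1₂, hab]
  · simp [hk₁ A hA, hk₂ A hA]
  · simp only [Pi.add_apply, Pi.smul_apply, smul_eq_mul, ← sum_filter] at hm₁ hm₂ ⊢
    rw [sum_add_distrib, ← mul_sum, ← mul_sum, hm₁, hm₂]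

theorem FeasibleDist.combo {f₁ f₂ : Fin N → ℝ} {R₁ R₂ : Finset (Fin N) → ℝ}
    (h₁ : FeasibleDist N k f₁ R₁) (h₂ : FeasibleDist N k f₂ R₂) {a b : ℝ} (ha : 0 ≤ a)
    (hb : 0 ≤ b) (hab : a + b = 1) : FeasibleDist N k (a • f₁ + b • f₂) (a • R₁ + b • R₂) :=
  convex_feasibleDist N k (x := (f₁, R₁)) h₁ (y := (f₂, R₂)) h₂ ha hb hab

theorem feasibleDist_dirac {A : Finset (Fin N)} (hA : A.card = k) :
    FeasibleDist N k (fun i => if i ∈ A then 1 else 0) (fun B => if B = A then 1 else 0) := by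
  refine ⟨fun B => by positivity, by simp, fun B hB => ?_, fun i => ?_⟩
  · simp [show B ≠ A by rintro rfl; exact hB hA]
  · rw [sum_eq_single A (fun B _ hB => by simp [hB]) (by simp)]
    simp [hA]

theorem FeasibleDist.sum_powersetCard (hP : FeasibleDist N k f P) : ∑ A ∈ univ.powersetCard k, P A = 1 := by
  rw [← hP.2.1]
  exact sum_subset (subset_univ _) fun A _ hA => hP.2.2.1 A (by simpa using hA)

theorem exists_feasibleDist_of_mem_hypersimplex {g : Fin N → ℝ} (hk0 : 0 < k)
    (hkN : k < N) (hg : ∀ i, 0 ≤ g i ∧ g i ≤ 1) (hgk : ∑ i, g i = k) :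
    ∃ R, FeasibleDist N k g R := by
  have hcard : #{r : Fin N | (r : ℕ) < k} = k := by simp [Fin.card_filter_val_lt, hkN.le]
  have hcard' : #{r : Fin N | ¬ (r : ℕ) < k} = N - k := by
    rw [filter_not, card_sdiff_of_subset (filter_subset _ _), hcard, card_univ, Fintype.card_fin]
  have hk : (0 : ℝ) < k := by exact_mod_cast hk0
  have hNk : (0 : ℝ) < N - k := by rw [sub_pos]; exact_mod_cast hkN
  -- `M i r` is the chance that element `i` lands in slot `r`; a permutation `σ` then selects the
  -- elements it sends to the first `k` slots.
  set M : Matrix (Fin N) (Fin N) ℝ :=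
    fun i r => if (r : ℕ) < k then g i / k else (1 - g i) / (N - k) with hM_def
  have hM : M ∈ doublyStochastic ℝ (Fin N) := by
    rw [mem_doublyStochastic_iff_sum]
    refine ⟨fun i r => ?_, fun i => ?_, fun r => ?_⟩
    · have hgi := hg i
      have hgi' : 0 ≤ 1 - g i := by linarith
      simp only [hM_def]
      split_ifs
      exacts [div_nonneg hgi.1 hk.le, div_nonneg hgi' hNk.le]
    · rw [hM_def, sum_ite, sum_const, sum_const, hcard, hcard', nsmul_eq_mul, nsmul_eq_mul,
        Nat.cast_sub hkN.le]
      field_simp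
      ring
    · by_cases hr : (r : ℕ) < k
      · simp [hM_def, hr, ← sum_div, hgk, hk.ne']
      · simp [hM_def, hr, ← sum_div, sum_sub_distrib, hgk, hNk.ne']
  obtain ⟨w, hw0, hw1, hwM⟩ := exists_eq_sum_perm_of_mem_doublyStochastic hM
  let A (σ : Equiv.Perm (Fin N)) : Finset (Fin N) := {i | (σ i : ℕ) < k}
  have hA (σ : Equiv.Perm (Fin N)) : (A σ).card = k := by
    rw [← hcard]; exact card_equiv σ (by simp [A])
  let z (σ : Equiv.Perm (Fin N)) : (Fin N → ℝ) × (Finset (Fin N) → ℝ) :=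
    (fun i => if i ∈ A σ then 1 else 0, fun B => if B = A σ then 1 else 0)
  have hmix : FeasibleDist N k (∑ σ, w σ • z σ).1 (∑ σ, w σ • z σ).2 :=
    (convex_feasibleDist N k).sum_mem (fun σ _ => hw0 σ) hw1 fun σ _ => feasibleDist_dirac (hA σ)
  suffices hfst : (∑ σ, w σ • z σ).1 = g from ⟨_, hfst ▸ hmix⟩
  ext i
  have hgM : g i = ∑ r : Fin N with r.val < k, M i r := by
    simp only [hM_def]
    rw [sum_congr rfl fun r hr => if_pos (mem_filter.1 hr).2, sum_const, hcard, nsmul_eq_mul]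
    field_simp
  simp only [hgM, ← hwM, Prod.fst_sum, Prod.smul_fst, Finset.sum_apply, Matrix.sum_apply,
    Matrix.smul_apply, Pi.smul_apply, smul_eq_mul]
  rw [sum_comm]
  refine sum_congr rfl fun σ _ => ?_
  simp [z, A, PEquiv.toMatrix_apply, Equiv.toPEquiv_apply]

theorem exists_feasibleDist_pos_at (hf : ∀ i, 0 < f i ∧ f i < 1)
    (hfk : ∑ i, f i = k) {A₀ : Finset (Fin N)} (hA₀ : A₀.card = k) :
    ∃ Q, FeasibleDist N k f Q ∧ 0 < Q A₀ := by
  rcases Nat.eq_zero_or_pos N with rfl | hN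
  · have hf0 : f = fun i => if i ∈ A₀ then 1 else 0 := Subsingleton.elim _ _
    exact ⟨fun B => if B = A₀ then 1 else 0, hf0 ▸ feasibleDist_dirac hA₀, by simp⟩
  have hne : (univ : Finset (Fin N)).Nonempty := ⟨⟨0, hN⟩, mem_univ _⟩
  have hk0 : 0 < k := by
    have := sum_pos (fun i _ => (hf i).1) hne
    rw [hfk] at this
    exact_mod_cast this
  have hkN : k < N := by
    have := sum_lt_sum_of_nonempty hne fun i _ => (hf i).2
    rw [hfk, sum_const, card_univ, Fintype.card_fin, nsmul_one] at this
    exact_mod_cast this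
  obtain ⟨ε, hεf, hε⟩ : ∃ ε, (∀ i, ε < f i ∧ ε < 1 - f i) ∧ 0 < ε :=
    ((eventually_all.2 fun i => nhdsWithin_le_nhds <|
      (eventually_lt_nhds (hf i).1).and (eventually_lt_nhds (sub_pos.2 (hf i).2))).and
      self_mem_nhdsWithin).exists (f := 𝓝[>] (0 : ℝ))
  have hε1 : 0 < 1 - ε := by linarith [(hεf ⟨0, hN⟩).1, (hf ⟨0, hN⟩).2]
  -- `f = (1 - ε) • g + ε • 𝟙_{A₀}` with `g` still in the hypersimplex.
  set g : Fin N → ℝ := fun i => (f i - ε * if i ∈ A₀ then 1 else 0) / (1 - ε) with hg_def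
  have hg (i : Fin N) : 0 ≤ g i ∧ g i ≤ 1 := by
    have := hεf i
    rw [hg_def, div_nonneg_iff, div_le_one hε1]
    split_ifs <;> constructor <;> first | (left; constructor <;> linarith) | linarith
  have hgk : ∑ i, g i = k := by
    rw [hg_def, ← sum_div, sum_sub_distrib, ← mul_sum, sum_boole, filter_mem_eq_inter, univ_inter,
      hA₀, hfk, div_eq_iff hε1.ne']
    ring
  obtain ⟨R, hR⟩ := exists_feasibleDist_of_mem_hypersimplex hk0 hkN hg hgk
  have hQ := hR.combo (feasibleDist_dirac hA₀) hε1.le hε.le (by ring)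
  have hfg : (1 - ε) • g + ε • (fun i => if i ∈ A₀ then (1 : ℝ) else 0) = f := by
    ext i
    simp only [hg_def, Pi.add_apply, Pi.smul_apply, smul_eq_mul]
    field_simp
    ring
  exact ⟨_, hfg ▸ hQ, add_pos_of_nonneg_of_pos (mul_nonneg hε1.le (hR.1 A₀)) (by simpa using hε)⟩

theorem subsetEntropy_eq_sum_negMulLog :
    subsetEntropy N P = ∑ A, negMulLog (P A) := by
  simp [subsetEntropy, negMulLog]

theorem FeasibleDist.pos_of_isMaxOn {Q : Finset (Fin N) → ℝ} (hP : FeasibleDist N k f P)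
    (hmax : IsMaxOn (subsetEntropy N) {Q | FeasibleDist N k f Q} P)
    (hQ : FeasibleDist N k f Q) {A₀ : Finset (Fin N)} (hQA₀ : 0 < Q A₀) : 0 < P A₀ := by
  -- Mixing in `t • Q` gains `Q A₀ * negMulLog t` at `A₀`; since `-log t → ∞`, this beats the
  -- linear change `t * (H Q - H P)` of the rest once `t` is small.
  refine (hP.1 A₀).lt_of_ne fun hPA₀ => ?_
  set c := |subsetEntropy N P - subsetEntropy N Q| / Q A₀ + 1
  have hc : 0 < c := by positivity
  set t := exp (-c)
  have ht0 : 0 < t := exp_pos _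
  have ht1 : t ≤ 1 := exp_le_one_iff.2 (neg_nonpos.2 hc.le)
  have hmix := hP.combo hQ (sub_nonneg.2 ht1) ht0.le (by ring)
  rw [Convex.combo_self (by ring)] at hmix
  have hle : subsetEntropy N ((1 - t) • P + t • Q) ≤ subsetEntropy N P := hmax hmix
  have hge := sum_negMulLog_combo_ge_of_eq_zero hP.1 hQ.1 ht0.le ht1 hPA₀.symm
  simp only [← subsetEntropy_eq_sum_negMulLog] at hge
  have hneg : negMulLog t = t * c := by simp [negMulLog, t, log_exp]
  have hQc : Q A₀ * c = |subsetEntropy N P - subsetEntropy N Q| + Q A₀ := by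
    simp only [c]; field_simp
  have hgain : t * (Q A₀ * c) ≤ t * (subsetEntropy N P - subsetEntropy N Q) := by
    have := hge.trans hle
    rw [hneg] at this
    linarith
  have := le_of_mul_le_mul_left hgain ht0
  linarith [le_abs_self (subsetEntropy N P - subsetEntropy N Q)]

theorem FeasibleDist.sum_mul_log_eq_zero_of_isMaxOn (hP : FeasibleDist N k f P)
    (hmax : IsMaxOn (subsetEntropy N) {Q | FeasibleDist N k f Q} P)
    (hpos : ∀ A : Finset (Fin N), A.card = k → 0 < P A) {w : Finset (Fin N) → ℝ}
    (hw0 : ∀ A : Finset (Fin N), A.card ≠ k → w A = 0) (hw1 : ∑ A, w A = 0)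
    (hwm : ∀ i, ∑ A, (if i ∈ A ∧ A.card = k then w A else 0) = 0) :
    ∑ A, w A * log (P A) = 0 := by
  have hPw (A : Finset (Fin N)) (hA : P A = 0) : w A = 0 :=
    hw0 A fun hk => (hpos A hk).ne' hA
  have hfeas : ∀ᶠ t in 𝓝 (0 : ℝ), FeasibleDist N k f (P + t • w) := by
    have hnonneg : ∀ᶠ t in 𝓝 (0 : ℝ), ∀ A, 0 ≤ P A + t * w A := eventually_all.2 fun A => by
      rcases (hP.1 A).eq_or_lt with h | h
      · simp [← h, hPw A h.symm]
      · have hcont : Continuous fun t : ℝ => P A + t * w A := by fun_prop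
        filter_upwards [hcont.tendsto' 0 (P A) (by simp) |>.eventually (lt_mem_nhds h)]
          with t ht using ht.le
    filter_upwards [hnonneg] with t ht
    obtain ⟨-, hP1, hPk, hPm⟩ := hP
    refine ⟨ht, ?_, fun A hA => ?_, fun i => ?_⟩
    · simp [sum_add_distrib, ← mul_sum, hP1, hw1]
    · simp [hPk A hA, hw0 A hA]
    · simp only [Pi.add_apply, Pi.smul_apply, smul_eq_mul, ← sum_filter] at hwm hPm ⊢
      rw [sum_add_distrib, ← mul_sum, hwm, hPm, mul_zero, add_zero]
  have hloc : IsLocalMax (fun t => ∑ A, negMulLog (P A + t * w A)) 0 :=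
    hfeas.mono fun t ht => by
      simpa [subsetEntropy_eq_sum_negMulLog] using hmax ht
  have hderiv := hloc.hasDerivAt_eq_zero (hasDerivAt_sum_negMulLog_add_mul hPw)
  simp only [sub_mul, neg_mul, one_mul, sum_sub_distrib, sum_neg_distrib, hw1] at hderiv
  simpa [mul_comm] using hderiv

theorem FeasibleDist.exists_eq_exp_of_isMaxOn (hP : FeasibleDist N k f P)
    (hmax : IsMaxOn (subsetEntropy N) {Q | FeasibleDist N k f Q} P)
    (hpos : ∀ A : Finset (Fin N), A.card = k → 0 < P A) :
    ∃ (c₀ : ℝ) (lam : Fin N → ℝ), ∀ A : Finset (Fin N), A.card = k →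
      P A = exp (c₀ + ∑ i ∈ A, lam i) := by
  -- Lagrange multipliers: `none` is the normalisation constraint, `some i` the marginal of `i`.
  obtain ⟨c, hc⟩ := exists_eq_sum_mul_of_forall_sum_mul_eq_zero
    (fun (j : Option (Fin N)) (A : Finset (Fin N)) =>
      j.elim (if A.card = k then 1 else 0) fun i => if i ∈ A ∧ A.card = k then 1 else 0)
    (fun A => if A.card = k then log (P A) else 0) fun v hv => by
      set w : Finset (Fin N) → ℝ := fun A => if A.card = k then v A else 0
      have := hP.sum_mul_log_eq_zero_of_isMaxOn hmax hpos (w := w) (fun A hA => if_neg hA)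
        (by simpa [w, mul_ite] using hv none) fun i => by
          refine (sum_congr rfl fun A _ => ?_).trans (hv (some i))
          by_cases hA : A.card = k <;> simp [w, hA]
      simpa [w, mul_ite] using this
  refine ⟨c none, fun i => c (some i), fun A hA => ?_⟩
  have := hc A
  simp only [hA, ↓reduceIte, and_true, Fintype.sum_option, Option.elim_none, mul_one,
    Option.elim_some, mul_ite, mul_zero, sum_ite_mem, univ_inter] at this
  rw [← this, exp_log (hpos A hA)]

end FeasibleDist

theorem stmt_7_general (N k : ℕ) (f : Fin N → ℝ)
    (hf : ∀ i, 0 < f i ∧ f i < 1) (hfk : ∑ i, f i = (k : ℝ))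
    (P : Finset (Fin N) → ℝ) (hP : FeasibleDist N k f P)
    (hmax : ∀ Q : Finset (Fin N) → ℝ, FeasibleDist N k f Q →
      subsetEntropy N Q ≤ subsetEntropy N P) :
    ∃ lam : Fin N → ℝ, ∀ A : Finset (Fin N), A.card = k →
      P A = Real.exp (∑ i ∈ A, lam i) /
        ∑ J ∈ Finset.univ.powersetCard k, Real.exp (∑ j ∈ J, lam j) := by
  have hpos (A : Finset (Fin N)) (hA : A.card = k) : 0 < P A :=
    have ⟨_, hQ, hQA⟩ := exists_feasibleDist_pos_at hf hfk hA
    hP.pos_of_isMaxOn hmax hQ hQA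
  obtain ⟨c₀, lam, hlam⟩ := hP.exists_eq_exp_of_isMaxOn hmax hpos
  exact ⟨lam, fun A hA => eq_exp_div_sum_exp (fun B hB => hlam B (mem_powersetCard_univ.1 hB))
    hP.sum_powersetCard (mem_powersetCard_univ.2 hA)⟩

theorem stmt_7 (N k : ℕ) (hk : k ≤ N) (f : Fin N → ℝ)
    (hf : ∀ i, 0 < f i ∧ f i < 1) (hfk : ∑ i, f i = (k : ℝ))
    (P : Finset (Fin N) → ℝ) (hP : FeasibleDist N k f P)
    (hmax : ∀ Q : Finset (Fin N) → ℝ, FeasibleDist N k f Q →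
      subsetEntropy N Q ≤ subsetEntropy N P) :
    ∃ lam : Fin N → ℝ, ∀ A : Finset (Fin N), A.card = k →
      P A = Real.exp (∑ i ∈ A, lam i) /
        ∑ J ∈ Finset.univ.powersetCard k, Real.exp (∑ j ∈ J, lam j) :=
  stmt_7_general N k f hf hfk P hP hmax
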